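/- arXiv:math/0609052 — 4 statements merged into one kernel-verified Lean document; each statement's English description precedes it below -/
import Mathlib

section
/- For any prime power q and positive integer n, the order of the finite unitary group U(n,q) (the group of n×n matrices A over F_{q^2} whose inverse equals the conjugate transpose under the involution c ↦ c^q) equals q^{n^2} · ∏_{j=1}^{n} (1 - (-1)^j / q^j). -/
/-!
Make the Frobenius `x ↦ x ^ q` the star of `F`, so that `U(n, q)` is `Matrix.unitaryGroup`.
It acts on the unit sphere `{v | star v ⬝ᵥ v = 1}` of `F ^ n`. The action is transitive, since
every unit vector extends to an orthonormal basis (Gram–Schmidt works because the trace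
`t + star t` is not identically zero and the norm `star μ * μ` maps `Fˣ` onto the nonzero fixed
points). The stabilizer of `e₀` is `diag(1, U(n - 1))`. So `|U(n)| = s n * |U(n - 1)|`, where
`s m` is the number of unit vectors in `F ^ m`. Counting vectors by their first coordinate, and
using that the number of vectors with `star v ⬝ᵥ v = c` is the same for every nonzero fixed `c`,
gives `s (m + 1) = (q + 1) q ^ (2m) - q s m`, that is `s (m + 1) = q ^ (2m+1) + (-1) ^ m q ^ m`.
-/

open Matrix Finset Polynomial

namespace FiniteUnitaryGroup

theorem two_le_of_card_eq_sq {α : Type*} [Fintype α] [Nontrivial α] {q : ℕ}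
    (h : Fintype.card α = q ^ 2) : 2 ≤ q := by
  have := h ▸ Fintype.one_lt_card (α := α)
  by_contra! hq
  interval_cases q <;> simp at this

theorem exists_ringHom_eq_pow_of_dvd_card {F : Type*} [Field F] [Fintype F] {q : ℕ}
    (hq : q ∣ Fintype.card F) :
    ∃ σ : F →+* F, ∀ x, σ x = x ^ q := by
  obtain ⟨k, hp, hcard⟩ := FiniteField.card F (ringChar F)
  obtain ⟨j, -, rfl⟩ := (Nat.dvd_prime_pow hp).1 (hcard ▸ hq)
  have : Fact (ringChar F).Prime := ⟨hp⟩
  exact ⟨iterateFrobenius F (ringChar F) j, iterateFrobenius_def _ _⟩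

abbrev starRingOfInvolutive {R : Type*} [CommSemiring R] (σ : R →+* R)
    (hσ : Function.Involutive σ) : StarRing R where
  star := σ
  star_involutive := hσ
  star_mul x y := by rw [map_mul, mul_comm]
  star_add := map_add σ

theorem card_pow_eq_mul_le {F : Type*} [Field F] {q : ℕ} (hq : 2 ≤ q) (a : F) :
    Nat.card {x : F // x ^ q = a * x} ≤ q := by
  classical
  set p : F[X] := X ^ q - C a * X
  have hdeg : p.natDegree = q := by
    rw [natDegree_sub_eq_left_of_natDegree_lt] <;> rw [natDegree_X_pow]
    exact (natDegree_C_mul_le a X).trans_lt (natDegree_X_le.trans_lt (by omega))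
  have hp : p ≠ 0 := fun h => by rw [h, natDegree_zero] at hdeg; omega
  calc Nat.card {x : F // x ^ q = a * x}
      ≤ Nat.card p.roots.toFinset :=
        Nat.card_le_card_of_injective (fun x => ⟨x.1, by simp [p, hp, x.2]⟩)
          (fun x y h => Subtype.ext (congrArg Subtype.val h :))
    _ ≤ q := by
        rw [Nat.card_eq_fintype_card, Fintype.card_coe, ← hdeg]
        exact (Multiset.toFinset_card_le _).trans (card_roots' p)

section FiniteStarField

variable {F : Type*} [Field F] [Fintype F] [StarRing F] {q : ℕ}
  (hF : Fintype.card F = q ^ 2) (hstar : ∀ x : F, star x = x ^ q)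
include hF hstar

theorem exists_add_star_ne_zero : ∃ t : F, t + star t ≠ 0 := by
  by_contra! h
  have hq := two_le_of_card_eq_sq hF
  have : Nat.card {x : F // x ^ q = -1 * x} = q ^ 2 := by
    rw [← hF, ← Nat.card_eq_fintype_card]
    exact Nat.card_congr (Equiv.subtypeUnivEquiv fun x => by
      rw [← hstar, neg_one_mul, eq_neg_iff_add_eq_zero, add_comm, h])
  have := card_pow_eq_mul_le hq (-1 : F)
  nlinarith

theorem card_selfAdjoint : Nat.card (selfAdjoint F) = q := by
  -- The trace `T x = x + star x` maps `F` into the fixed points; its kernel and the fixed points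
  -- are root sets of polynomials of degree `q`, and `|ker T| * |range T| = |F| = q ^ 2`.
  have hq := two_le_of_card_eq_sq hF
  have hle : ∀ a : F, Nat.card {x : F // star x = a * x} ≤ q := fun a => by
    simpa only [hstar] using card_pow_eq_mul_le hq a
  let T : F →+ F := AddMonoidHom.id F + (starAddEquiv : F ≃+ F).toAddMonoidHom
  have hker : Nat.card T.ker ≤ q := by
    refine (Nat.card_congr (Equiv.subtypeEquivRight fun x => ?_)).trans_le (hle (-1))
    simp [T, eq_neg_iff_add_eq_zero, add_comm]
  have hrange : T.range ≤ selfAdjoint F := by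
    rintro _ ⟨x, rfl⟩
    simp [T, selfAdjoint.mem_iff, add_comm]
  have hK : Nat.card (selfAdjoint F) ≤ q := by
    refine (Nat.card_congr (Equiv.subtypeEquivRight fun x => ?_)).trans_le (hle 1)
    simp [selfAdjoint.mem_iff]
  have htot : Nat.card T.ker * Nat.card T.range = q ^ 2 := by
    rw [← AddSubgroup.index_ker, AddSubgroup.card_mul_index, Nat.card_eq_fintype_card, hF]
  have := AddSubgroup.card_le_of_le hrange
  nlinarith

theorem exists_star_mul_self_eq {c : F} (hc : star c = c) (h0 : c ≠ 0) :
    ∃ μ : F, star μ * μ = c := by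
  -- In the cyclic group `Fˣ` of order `(q - 1) * (q + 1)`, the image of `u ↦ u ^ (q + 1)` and
  -- the kernel of `u ↦ u ^ (q - 1)` both have order `q - 1`.
  have hq := two_le_of_card_eq_sq hF
  have hunits : Nat.card Fˣ = (q - 1) * (q + 1) := by
    rw [Nat.card_units, Nat.card_eq_fintype_card, hF, ← one_pow 2, Nat.sq_sub_sq, mul_comm,
      one_pow]
  let N : Fˣ →* Fˣ := powMonoidHom (q + 1)
  let M : Fˣ →* Fˣ := powMonoidHom (q - 1)
  have hle : N.range ≤ M.ker := by
    rintro _ ⟨u, rfl⟩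
    simp only [MonoidHom.mem_ker, M, N, powMonoidHom_apply, ← pow_mul]
    rw [mul_comm, ← hunits, pow_card_eq_one']
  have heq : N.range = M.ker := by
    refine Subgroup.eq_of_le_of_card_ge hle ?_
    rw [IsCyclic.card_powMonoidHom_ker, IsCyclic.card_powMonoidHom_range, hunits]
    simp
  obtain ⟨μ, hμ⟩ : Units.mk0 c h0 ∈ N.range := by
    rw [heq, MonoidHom.mem_ker, ← Units.val_inj]
    simp only [M, powMonoidHom_apply, Units.val_pow_eq_pow_val, Units.val_mk0, Units.val_one]
    refine mul_right_cancel₀ h0 ?_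
    rw [pow_sub_one_mul (by omega), ← hstar, hc, one_mul]
  refine ⟨μ, ?_⟩
  have := congrArg Units.val hμ
  simp only [N, powMonoidHom_apply, Units.val_pow_eq_pow_val, Units.val_mk0] at this
  rw [hstar, ← pow_succ, this]

end FiniteStarField

section Hermitian

variable {F : Type*} [Field F] [StarRing F] {n : Type*} [Fintype n]

theorem star_smul_dotProduct_smul (μ : F) (x : n → F) :
    star (μ • x) ⬝ᵥ (μ • x) = star μ * μ * (star x ⬝ᵥ x) := by
  rw [star_smul, smul_dotProduct, dotProduct_smul, smul_eq_mul, smul_eq_mul]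
  ring

theorem star_mulVec_dotProduct_mulVec [DecidableEq n] {A : Matrix n n F}
    (hA : A ∈ unitaryGroup n F) (x y : n → F) : star (A *ᵥ x) ⬝ᵥ (A *ᵥ y) = star x ⬝ᵥ y := by
  rw [star_mulVec, ← dotProduct_mulVec, mulVec_mulVec, ← star_eq_conjTranspose,
    mem_unitaryGroup_iff'.1 hA, one_mulVec]

def IsOrthonormal {ι : Type*} [DecidableEq ι] (v : ι → n → F) : Prop :=
  ∀ i j, star (v i) ⬝ᵥ v j = if i = j then 1 else 0

def orthogonalSubmodule {ι : Type*} (v : ι → n → F) : Submodule F (n → F) :=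
  LinearMap.ker (Matrix.of fun i => star (v i)).mulVecLin

theorem mem_orthogonalSubmodule {ι : Type*} {v : ι → n → F} {w : n → F} :
    w ∈ orthogonalSubmodule v ↔ ∀ i, star (v i) ⬝ᵥ w = 0 := by
  simp only [orthogonalSubmodule, LinearMap.mem_ker, Matrix.mulVecLin_apply, funext_iff]
  rfl

theorem orthogonalSubmodule_ne_bot {k : ℕ} (v : Fin k → n → F) (hk : k < Fintype.card n) :
    orthogonalSubmodule v ≠ ⊥ :=
  LinearMap.ker_ne_bot_of_finrank_lt (by simpa using hk)

theorem IsOrthonormal.exists_star_dotProduct_ne_zero {ι : Type*} [Fintype ι] [DecidableEq ι]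
    [DecidableEq n] {v : ι → n → F} (hv : IsOrthonormal v) {w : n → F}
    (hw : w ∈ orthogonalSubmodule v) (hw0 : w ≠ 0) :
    ∃ x ∈ orthogonalSubmodule v, star w ⬝ᵥ x ≠ 0 := by
  -- project a coordinate vector `e j` with `w j ≠ 0` onto the orthogonal complement
  obtain ⟨j, hj⟩ := Function.ne_iff.1 hw0
  set e : n → F := Pi.single j 1
  refine ⟨e - ∑ i, (star (v i) ⬝ᵥ e) • v i, mem_orthogonalSubmodule.2 fun l => ?_, ?_⟩
  · simp [dotProduct_sub, dotProduct_sum, dotProduct_smul, hv l]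
  · have hwv : ∀ i, star w ⬝ᵥ v i = 0 := fun i => by
      rw [star_dotProduct, mem_orthogonalSubmodule.1 hw i, star_zero]
    simpa [dotProduct_sub, dotProduct_sum, dotProduct_smul, hwv, e] using hj

theorem IsOrthonormal.snoc {k : ℕ} {v : Fin k → n → F} (hv : IsOrthonormal v) {u : n → F}
    (hu : u ∈ orthogonalSubmodule v) (huu : star u ⬝ᵥ u = 1) :
    IsOrthonormal (Fin.snoc v u : Fin (k + 1) → n → F) := by
  have hvu := mem_orthogonalSubmodule.1 hu
  intro i j
  induction i using Fin.lastCases <;> induction j using Fin.lastCases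
  · simpa using huu
  · simp [star_dotProduct u, hvu, (Fin.castSucc_lt_last _).ne']
  · simp [hvu, (Fin.castSucc_lt_last _).ne]
  · simp [hv _ _, Fin.castSucc_inj]

theorem exists_star_dotProduct_self_ne_zero (htrace : ∃ t : F, t + star t ≠ 0)
    {W : Submodule F (n → F)} {w x : n → F} (hw : w ∈ W) (hx : x ∈ W)
    (h : star w ⬝ᵥ x ≠ 0) : ∃ u ∈ W, star u ⬝ᵥ u ≠ 0 := by
  -- if `w`, `x` are isotropic, `u = w + (t / star w ⬝ᵥ x) • x` has `star u ⬝ᵥ u = t + star t`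
  by_contra! hiso
  obtain ⟨t, ht⟩ := htrace
  have hz := hiso (w + (t * (star w ⬝ᵥ x)⁻¹) • x) (W.add_mem hw (W.smul_mem _ hx))
  simp only [star_add, star_smul, add_dotProduct, dotProduct_add, smul_dotProduct,
    dotProduct_smul, smul_eq_mul, hiso w hw, hiso x hx, star_dotProduct x w] at hz
  rw [mul_zero, add_zero, inv_mul_cancel_right₀ h, ← star_mul', inv_mul_cancel_right₀ h] at hz
  exact ht (by linear_combination hz)

theorem exists_smul_star_dotProduct_self_eq_one
    (hnorm : ∀ c : F, star c = c → c ≠ 0 → ∃ μ, star μ * μ = c)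
    {u : n → F} (hu : star u ⬝ᵥ u ≠ 0) : ∃ μ : F, star (μ • u) ⬝ᵥ (μ • u) = 1 := by
  obtain ⟨μ, hμ⟩ := hnorm _ (star_dotProduct u u).symm hu
  refine ⟨μ⁻¹, ?_⟩
  rw [star_smul_dotProduct_smul, ← hμ, star_inv₀, ← mul_inv, inv_mul_cancel₀ (hμ ▸ hu)]

variable (htrace : ∃ t : F, t + star t ≠ 0)
  (hnorm : ∀ c : F, star c = c → c ≠ 0 → ∃ μ, star μ * μ = c)
include htrace hnorm

theorem IsOrthonormal.exists_orthogonal_unit [DecidableEq n] {k : ℕ} {v : Fin k → n → F}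
    (hv : IsOrthonormal v) (hk : k < Fintype.card n) :
    ∃ u ∈ orthogonalSubmodule v, star u ⬝ᵥ u = 1 := by
  obtain ⟨w, hw, hw0⟩ := Submodule.exists_mem_ne_zero_of_ne_bot (orthogonalSubmodule_ne_bot v hk)
  obtain ⟨x, hx, hwx⟩ := hv.exists_star_dotProduct_ne_zero hw hw0
  obtain ⟨u, hu, huu⟩ := exists_star_dotProduct_self_ne_zero htrace hw hx hwx
  obtain ⟨μ, hμ⟩ := exists_smul_star_dotProduct_self_eq_one hnorm huu
  exact ⟨μ • u, Submodule.smul_mem _ μ hu, hμ⟩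

theorem exists_isOrthonormal_fin_succ [DecidableEq n] {v : n → F} (hv : star v ⬝ᵥ v = 1) :
    ∀ t, t < Fintype.card n → ∃ w : Fin (t + 1) → n → F, IsOrthonormal w ∧ w 0 = v
  | 0, _ => ⟨fun _ => v, fun i j => by simp [Subsingleton.elim (α := Fin 1) i j, hv], rfl⟩
  | t + 1, ht => by
    obtain ⟨w, hw, hw0⟩ := exists_isOrthonormal_fin_succ hv t (by omega)
    obtain ⟨u, hu, huu⟩ := hw.exists_orthogonal_unit htrace hnorm ht
    exact ⟨Fin.snoc w u, hw.snoc hu huu, by simpa using hw0⟩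

theorem exists_mem_unitaryGroup_mulVec_single {m : ℕ} {v : Fin (m + 1) → F}
    (hv : star v ⬝ᵥ v = 1) :
    ∃ A ∈ unitaryGroup (Fin (m + 1)) F, A *ᵥ Pi.single 0 1 = v := by
  obtain ⟨w, hw, hw0⟩ := exists_isOrthonormal_fin_succ htrace hnorm hv m (by simp)
  refine ⟨(Matrix.of w)ᵀ, mem_unitaryGroup_iff'.2 ?_, by simpa [mulVec_single_one] using hw0⟩
  ext i j
  simpa [Matrix.mul_apply, Matrix.one_apply, dotProduct] using hw i j

theorem orbit_single_zero (m : ℕ) :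
    MulAction.orbit (unitaryGroup (Fin (m + 1)) F) (Pi.single 0 1 : Fin (m + 1) → F) =
      {v | star v ⬝ᵥ v = 1} := by
  ext v
  constructor
  · rintro ⟨A, rfl⟩
    show star (A.1 *ᵥ _) ⬝ᵥ (A.1 *ᵥ _) = 1
    rw [star_mulVec_dotProduct_mulVec A.2]
    simp
  · intro hv
    obtain ⟨A, hA, hAv⟩ := exists_mem_unitaryGroup_mulVec_single htrace hnorm hv
    exact ⟨⟨A, hA⟩, hAv⟩

end Hermitian

section Stabilizer

variable {F : Type*} [Field F] [StarRing F] {m : ℕ}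

def oneBlockDiag : Matrix (Fin m) (Fin m) F →⋆* Matrix (Fin (m + 1)) (Fin (m + 1)) F where
  toFun B := Matrix.of (Fin.cons (Pi.single 0 1) fun i => Fin.cons 0 (B i))
  map_one' := by
    ext i j
    induction i using Fin.cases <;> induction j using Fin.cases <;>
      simp [Matrix.one_apply, (Fin.succ_ne_zero _).symm]
  map_mul' B C := by
    ext i j
    induction i using Fin.cases <;> induction j using Fin.cases <;>
      simp [Matrix.mul_apply, Fin.sum_univ_succ]
  map_star' B := by
    ext i j
    induction i using Fin.cases <;> induction j using Fin.cases <;> simp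

theorem oneBlockDiag_injective : Function.Injective (oneBlockDiag (F := F) (m := m)) :=
  fun _ _ h => Matrix.ext fun i j => congrFun (congrFun h i.succ) j.succ

theorem stabilizer_single_zero :
    MulAction.stabilizer (unitaryGroup (Fin (m + 1)) F) (Pi.single 0 1 : Fin (m + 1) → F) =
      (Unitary.map (oneBlockDiag (F := F) (m := m))).toMonoidHom.range := by
  ext A
  constructor
  · intro hA
    have hcol : A.1 *ᵥ Pi.single 0 1 = Pi.single 0 1 := hA
    have hrow : star A.1 *ᵥ Pi.single 0 1 = Pi.single 0 1 := by
      conv_lhs => rw [← hcol, mulVec_mulVec, mem_unitaryGroup_iff'.1 A.2, one_mulVec]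
    set B := A.1.submatrix Fin.succ Fin.succ
    have hA' : A.1 = oneBlockDiag B := by
      ext i j
      cases i using Fin.cases <;> cases j using Fin.cases
      case zero.zero => simpa [mulVec_single_one, oneBlockDiag] using congrFun hcol 0
      case zero.succ j =>
        simpa [mulVec_single_one, oneBlockDiag, Fin.succ_ne_zero] using congrFun hrow j.succ
      case succ.zero i =>
        simpa [mulVec_single_one, oneBlockDiag, Fin.succ_ne_zero] using congrFun hcol i.succ
      case succ.succ => rfl
    have hB : B ∈ unitaryGroup (Fin m) F := by
      refine mem_unitaryGroup_iff.2 (oneBlockDiag_injective ?_)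
      rw [map_mul, map_star, ← hA', map_one, ← mem_unitaryGroup_iff]
      exact A.2
    exact ⟨⟨B, hB⟩, Subtype.ext hA'.symm⟩
  · rintro ⟨B, rfl⟩
    show oneBlockDiag B.1 *ᵥ Pi.single 0 1 = Pi.single 0 1
    ext i
    induction i using Fin.cases <;> simp [oneBlockDiag]

end Stabilizer

section Spheres

variable {F : Type*} [Field F] [Fintype F] [DecidableEq F] [StarRing F]

def sphereCard (m : ℕ) (c : F) : ℕ := #{x : Fin m → F | star x ⬝ᵥ x = c}

theorem sphereCard_succ (m : ℕ) (c : F) :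
    sphereCard (m + 1) c = ∑ a : F, sphereCard m (c - star a * a) := by
  simp only [sphereCard, card_filter]
  rw [← (Fin.consEquiv fun _ => F).sum_comp, Fintype.sum_prod_type]
  refine sum_congr rfl fun a _ => sum_congr rfl fun y _ => ?_
  simp [Fin.consEquiv, dotProduct, Fin.sum_univ_succ, eq_sub_iff_add_eq, add_comm]

theorem sphereCard_star_mul_self_mul {μ : F} (hμ : μ ≠ 0) (m : ℕ) (c : F) :
    sphereCard m (star μ * μ * c) = sphereCard m c := by
  symm
  refine card_nbij' (μ • ·) (μ⁻¹ • ·) ?_ ?_ ?_ ?_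
  · intro x hx
    simp only [mem_coe, mem_filter, mem_univ, true_and] at hx ⊢
    rw [star_smul_dotProduct_smul, hx]
  · intro x hx
    simp only [mem_coe, mem_filter, mem_univ, true_and] at hx ⊢
    rw [star_smul_dotProduct_smul, hx, star_inv₀, ← mul_assoc, ← mul_inv,
      inv_mul_cancel₀ (mul_ne_zero (star_ne_zero.2 hμ) hμ), one_mul]
  · intro x _; simp [smul_smul, hμ]
  · intro x _; simp [smul_smul, hμ]

theorem sum_sphereCard (m : ℕ) :
    ∑ c ∈ {c : F | star c = c}, sphereCard m c = Fintype.card F ^ m := by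
  calc ∑ c ∈ {c : F | star c = c}, sphereCard m c = #(univ : Finset (Fin m → F)) :=
        (card_eq_sum_card_fiberwise fun x _ => by simpa using (star_dotProduct x x).symm).symm
    _ = Fintype.card F ^ m := by simp

theorem card_unitaryGroup_succ (htrace : ∃ t : F, t + star t ≠ 0)
    (hnorm : ∀ c : F, star c = c → c ≠ 0 → ∃ μ, star μ * μ = c) (m : ℕ) :
    Nat.card (unitaryGroup (Fin (m + 1)) F) =
      sphereCard (m + 1) (1 : F) * Nat.card (unitaryGroup (Fin m) F) := by
  rw [← Subgroup.card_mul_index (MulAction.stabilizer _ (Pi.single 0 1 : Fin (m + 1) → F)),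
    MulAction.index_stabilizer, orbit_single_zero htrace hnorm, stabilizer_single_zero,
    ← Nat.card_congr (MonoidHom.ofInjective (Unitary.map_injective oneBlockDiag_injective)).toEquiv,
    mul_comm, sphereCard, Set.ncard_eq_toFinset_card', Set.toFinset_ofPred]

variable {q : ℕ} (hF : Fintype.card F = q ^ 2) (hstar : ∀ x : F, star x = x ^ q)
include hF hstar

theorem sphereCard_eq_sphereCard_one {c : F} (hc : star c = c) (h0 : c ≠ 0) (m : ℕ) :
    sphereCard m c = sphereCard m (1 : F) := by
  obtain ⟨μ, rfl⟩ := exists_star_mul_self_eq hF hstar hc h0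
  simpa using sphereCard_star_mul_self_mul (by rintro rfl; simp at h0) m (1 : F)

theorem sphereCard_zero_add_mul_sphereCard_one (m : ℕ) :
    sphereCard m (0 : F) + (q - 1) * sphereCard m (1 : F) = q ^ (2 * m) := by
  have hK : #{c : F | star c = c} = q := by
    rw [← card_selfAdjoint hF hstar, ← Fintype.card_subtype, ← Nat.card_eq_fintype_card]
    rfl
  have h0 : (0 : F) ∈ ({c : F | star c = c} : Finset F) := by simp
  rw [pow_mul, ← hF, ← sum_sphereCard, sum_eq_add_sum_sdiff_singleton_of_mem h0,
    sum_congr rfl fun c hc => sphereCard_eq_sphereCard_one hF hstar (by simp_all) (by simp_all) m,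
    sum_const, card_sdiff_of_subset (singleton_subset_iff.2 h0), hK, card_singleton, smul_eq_mul]

theorem sphereCard_succ_zero (m : ℕ) :
    sphereCard (m + 1) (0 : F) = sphereCard m (0 : F) + (q ^ 2 - 1) * sphereCard m (1 : F) := by
  have hneg : ∀ a ∈ univ \ {(0 : F)}, sphereCard m (0 - star a * a) = sphereCard m (1 : F) := by
    intro a ha
    rw [zero_sub, ← mul_neg_one, sphereCard_star_mul_self_mul (by simpa using ha),
      sphereCard_eq_sphereCard_one hF hstar (by simp) (by simp)]
  rw [sphereCard_succ, sum_eq_add_sum_sdiff_singleton_of_mem (mem_univ 0), sum_congr rfl hneg,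
    sum_const, card_sdiff_of_subset (subset_univ _), card_univ, hF, card_singleton, smul_eq_mul]
  simp

theorem sphereCard_succ_one (m : ℕ) :
    (sphereCard (m + 1) (1 : F) : ℚ) = (q + 1) * q ^ (2 * m) - q * sphereCard m (1 : F) := by
  have hq := two_le_of_card_eq_sq hF
  have hm := sphereCard_zero_add_mul_sphereCard_one hF hstar m
  have hm1 := sphereCard_zero_add_mul_sphereCard_one hF hstar (m + 1)
  have hzero := sphereCard_succ_zero hF hstar m
  have hq1 : (q : ℚ) - 1 ≠ 0 := by
    have : (2 : ℚ) ≤ q := by exact_mod_cast hq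
    linarith
  have hq2 : 1 ≤ q ^ 2 := Nat.one_le_pow _ _ (by omega)
  qify [show 1 ≤ q by omega, hq2] at hm hm1 hzero
  refine mul_left_cancel₀ hq1 ?_
  linear_combination hm1 - hzero - hm

theorem sphereCard_succ_one_eq (m : ℕ) :
    (sphereCard (m + 1) (1 : F) : ℚ) = q ^ (2 * m + 1) + (-1) ^ m * q ^ m := by
  induction m with
  | zero =>
    rw [sphereCard_succ_one hF hstar]
    simp [sphereCard]
  | succ m ih =>
    rw [sphereCard_succ_one hF hstar, ih]
    ring

theorem card_unitaryGroup (n : ℕ) :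
    (Nat.card (unitaryGroup (Fin n) F) : ℚ) =
      q ^ (n ^ 2) * ∏ j ∈ Icc 1 n, (1 - (-1) ^ j / (q : ℚ) ^ j) := by
  have hq : (q : ℚ) ≠ 0 := by have := two_le_of_card_eq_sq hF; positivity
  induction n with
  | zero => simp
  | succ m ih =>
    rw [card_unitaryGroup_succ (exists_add_star_ne_zero hF hstar)
      (fun c => exists_star_mul_self_eq hF hstar), Nat.cast_mul, sphereCard_succ_one_eq hF hstar,
      ih, prod_Icc_succ_top (by omega)]
    field_simp
    ring

end Spheres

end FiniteUnitaryGroup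

theorem unitary_group_card_general (q n : ℕ) (F : Type) [Field F] [Fintype F]
    (hF : Fintype.card F = q ^ 2) :
    (Nat.card {A : Matrix (Fin n) (Fin n) F // A * (A.map (· ^ q)).transpose = 1} : ℚ) =
      (q : ℚ) ^ (n ^ 2) * ∏ j ∈ Finset.Icc 1 n, (1 - (-1) ^ j / (q : ℚ) ^ j) := by
  classical
  obtain ⟨σ, hσ⟩ := FiniteUnitaryGroup.exists_ringHom_eq_pow_of_dvd_card
    (hF ▸ dvd_pow_self q two_ne_zero)
  have hinv : Function.Involutive σ := fun x => by
    rw [hσ, hσ, ← pow_mul, ← sq, ← hF, FiniteField.pow_card]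
  let _ := FiniteUnitaryGroup.starRingOfInvolutive σ hinv
  have hstarA : ∀ A : Matrix (Fin n) (Fin n) F, star A = (A.map (· ^ q))ᵀ := fun A => by
    ext
    exact hσ _
  rw [← FiniteUnitaryGroup.card_unitaryGroup hF hσ n]
  exact congrArg _ (Nat.card_congr (Equiv.subtypeEquivRight fun A => by
    rw [mem_unitaryGroup_iff, hstarA]))

/-- The order of the finite unitary group `U(n,q)`, realized as the set of `n × n`
matrices `A` over the field `F` with `q^2` elements satisfying
`A * (A.map (·^q)).transpose = 1` (i.e. the inverse of `A` is its conjugate transpose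
under the involution `c ↦ c^q`), equals `q^{n^2} · ∏_{j=1}^{n} (1 - (-1)^j / q^j)`. -/
theorem unitary_group_card (q n : ℕ) (hq : IsPrimePow q) (hn : 0 < n)
    (F : Type) [Field F] [Fintype F] (hF : Fintype.card F = q ^ 2) :
    (Nat.card {A : Matrix (Fin n) (Fin n) F // A * (A.map (· ^ q)).transpose = 1} : ℚ) =
      (q : ℚ) ^ (n ^ 2) * ∏ j ∈ Finset.Icc 1 n, (1 - (-1) ^ j / (q : ℚ) ^ j) :=
  unitary_group_card_general q n F hF
end

section
/- Let φ be a monic irreducible polynomial of degree d over F_{q^2} with φ(0) ≠ 0 satisfying φ = φ̃. If ρ is a root of φ in F_{q^{2d}}, then there exists a positive integer j ≤ d such that the multiplicative order of ρ divides q^{2j-1} + 1. -/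
/-!
The `q`-th power map is additive on `E`, so `φ = φ̃` makes `(ρ ^ q)⁻¹` a second root of the
irreducible `φ`. As `Gal(E/F)` has order `d` and is generated by `x ↦ x ^ q ^ 2`, this gives
`(ρ ^ q)⁻¹ = ρ ^ q ^ (2 * i)` for some `i < d`, that is `ρ ^ (q ^ (2 * i) + q) = 1`. For `i = 0`
this is the claim with `j = 1`; for `i ≥ 1` the factor `q` of `q ^ (2 * i) + q` can be dropped
because the `q`-th power map is injective.
-/

open Polynomial

theorem FiniteField.exists_expChar_of_card_eq_pow {K : Type*} [Field K] [Fintype K] {q m : ℕ}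
    (hq : IsPrimePow q) (hK : Fintype.card K = q ^ m) :
    ∃ p n, ExpChar K p ∧ q = p ^ n := by
  obtain ⟨p, n, hp, -, rfl⟩ := hq
  replace hp := hp.nat_prime
  have hchar : CharP K p := by
    rw [CharP.charP_iff_prime_eq_zero hp]
    have : ((p ^ n) ^ m : ℕ) = (0 : K) := hK ▸ FiniteField.cast_card_eq_zero K
    push_cast at this
    exact eq_zero_of_pow_eq_zero (eq_zero_of_pow_eq_zero this)
  exact ⟨p, n, .prime hp, rfl⟩

theorem FiniteField.finrank_eq_of_card_eq_pow {K L : Type*} [Field K] [Fintype K] [Field L]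
    [Fintype L] [Algebra K L] {d : ℕ} (h : Fintype.card L = Fintype.card K ^ d) :
    Module.finrank K L = d :=
  Nat.pow_right_injective Fintype.one_lt_card <| Module.card_eq_pow_finrank.symm.trans h

theorem FiniteField.exists_lt_finrank_eq_pow_card_pow_of_minpoly_eq {K L : Type*} [Field K]
    [Fintype K] [Field L] [Finite L] [Algebra K L] {x y : L}
    (h : minpoly K x = minpoly K y) :
    ∃ i < Module.finrank K L, y = x ^ Fintype.card K ^ i := by
  obtain ⟨σ, rfl⟩ := (Normal.minpoly_eq_iff_mem_orbit L).mp h.symm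
  obtain ⟨⟨i, hi⟩, rfl⟩ := (bijective_frobeniusAlgEquivOfAlgebraic_pow K L).2 σ
  refine ⟨i, hi, ?_⟩
  simp [AlgEquiv.coe_pow, coe_frobeniusAlgEquivOfAlgebraic_iterate]

theorem orderOf_dvd_pow_add_one_of_pow_add_eq_one {R : Type*} [CommRing R] [IsReduced R]
    (p : ℕ) [ExpChar R p] (n k : ℕ) {x : R} (h : x ^ ((p ^ n) ^ (k + 1) + p ^ n) = 1) :
    orderOf x ∣ (p ^ n) ^ k + 1 := by
  refine orderOf_dvd_of_pow_eq_one (iterateFrobenius_inj R p n ?_)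
  rw [iterateFrobenius_def, map_one, ← pow_mul, ← h]
  ring_nf

theorem ne_zero_of_aeval_eq_zero_of_coeff_zero_ne_zero {F E : Type*} [Field F] [CommRing E]
    [Nontrivial E] [Algebra F E] {φ : F[X]} (h0 : φ.coeff 0 ≠ 0) {ρ : E} (hρ : aeval ρ φ = 0) :
    ρ ≠ 0 := by
  rintro rfl
  rw [← coeff_zero_eq_aeval_zero', map_eq_zero_iff _ (algebraMap F E).injective] at hρ
  exact h0 hρ

/-- `φ̃ = a₀ ^ (-q) • X ^ d • φ⁽ᵠ⁾(1 / X)`, where `φ⁽ᵠ⁾` has the `q`-th powers of the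
coefficients of `φ` as coefficients. -/
noncomputable def twistedReciprocal {F : Type*} [Field F] (q : ℕ) (φ : F[X]) : F[X] :=
  X ^ φ.natDegree + ∑ j ∈ Finset.range φ.natDegree,
    C ((φ.coeff 0)⁻¹ ^ q * φ.coeff (φ.natDegree - j) ^ q) * X ^ j

theorem aeval_inv_pow_twistedReciprocal {F E : Type*} [Field F] [Field E] [Algebra F E]
    (p : ℕ) [ExpChar E p] (n : ℕ) {φ : F[X]} (h0 : φ.coeff 0 ≠ 0) {ρ : E}
    (hρ : aeval ρ φ = 0) : aeval (ρ ^ p ^ n)⁻¹ (twistedReciprocal (p ^ n) φ) = 0 := by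
  set q := p ^ n with hq
  set d := φ.natDegree
  set a : ℕ → E := fun k ↦ algebraMap F E (φ.coeff k)
  have hρq : ρ ^ q ≠ 0 := pow_ne_zero _ (ne_zero_of_aeval_eq_zero_of_coeff_zero_ne_zero h0 hρ)
  have ha0 : a 0 ^ q ≠ 0 := pow_ne_zero _ ((_root_.map_ne_zero _).mpr h0)
  have hterm : ∀ j < d, a 0 ^ q * (ρ ^ q) ^ d * ((a 0)⁻¹ ^ q * a (d - j) ^ q * (ρ ^ q)⁻¹ ^ j)
      = (a (d - j) * ρ ^ (d - j)) ^ q := by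
    intro j hj
    rw [mul_pow, pow_right_comm ρ (d - j) q, pow_sub₀ _ hρq hj.le, inv_pow, inv_pow]
    field_simp
  have hsum : a 0 ^ q * (ρ ^ q) ^ d * aeval (ρ ^ q)⁻¹ (twistedReciprocal q φ)
      = (aeval ρ φ) ^ q := calc
    _ = (a 0 * ρ ^ 0) ^ q + ∑ j ∈ Finset.range d, (a (d - j) * ρ ^ (d - j)) ^ q := by
      simp only [twistedReciprocal, map_add, map_sum, map_mul, map_pow, aeval_C, aeval_X,
        map_inv₀, mul_add, Finset.mul_sum]
      rw [Finset.sum_congr rfl fun j hj ↦ hterm j (Finset.mem_range.mp hj), inv_pow,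
        mul_inv_cancel_right₀ (pow_ne_zero _ hρq), pow_zero, mul_one]
    _ = ∑ k ∈ Finset.range (d + 1), (a k * ρ ^ k) ^ q := by
      rw [Finset.sum_range_succ', add_comm, ← Finset.sum_range_reflect]
      congr 1
      refine Finset.sum_congr rfl fun j hj ↦ ?_
      have := Finset.mem_range.mp hj
      rw [show d - (d - 1 - j) = j + 1 by omega]
    _ = (aeval ρ φ) ^ q := by
      rw [hq, ← sum_pow_char_pow, aeval_eq_sum_range]
      simp only [Algebra.smul_def, a, d]
  rw [hρ, zero_pow (expChar_pow_pos E p n).ne'] at hsum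
  exact (mul_eq_zero.mp hsum).resolve_left (mul_ne_zero ha0 (pow_ne_zero _ hρq))

theorem order_root_selfconj_dvd_general (q d : ℕ) (hq : IsPrimePow q) (hd : 0 < d)
    (F : Type) [Field F] [Fintype F] (hF : Fintype.card F = q ^ 2)
    (E : Type) [Field E] [Fintype E] [Algebra F E] (hE : Fintype.card E = q ^ (2 * d))
    (φ : Polynomial F) (hirr : Irreducible φ)
    (hdeg : φ.natDegree = d) (h0 : φ.coeff 0 ≠ 0)
    (hself : φ = X ^ d + ∑ j ∈ Finset.range d,
        C ((φ.coeff 0)⁻¹ ^ q * (φ.coeff (d - j)) ^ q) * X ^ j)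
    (ρ : E) (hρ : aeval ρ φ = 0) :
    ∃ j : ℕ, 1 ≤ j ∧ j ≤ d ∧ orderOf ρ ∣ q ^ (2 * j - 1) + 1 := by
  obtain ⟨p, n, hchar, rfl⟩ := FiniteField.exists_expChar_of_card_eq_pow hq hE
  have hfinrank : Module.finrank F E = d :=
    FiniteField.finrank_eq_of_card_eq_pow (by rw [hE, hF, pow_mul])
  have hy : aeval (ρ ^ p ^ n)⁻¹ φ = 0 := by
    have := aeval_inv_pow_twistedReciprocal p n h0 hρ
    subst hdeg
    rwa [twistedReciprocal, ← hself] at this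
  obtain ⟨i, hi, hyi⟩ := FiniteField.exists_lt_finrank_eq_pow_card_pow_of_minpoly_eq
    ((minpoly.eq_of_irreducible hirr hρ).symm.trans (minpoly.eq_of_irreducible hirr hy))
  have hone : ρ ^ ((p ^ n) ^ (2 * i) + p ^ n) = 1 := by
    rw [pow_add, pow_mul, ← hF, ← hyi,
      inv_mul_cancel₀ (pow_ne_zero _ (ne_zero_of_aeval_eq_zero_of_coeff_zero_ne_zero h0 hρ))]
  rcases i with _ | i
  · exact ⟨1, le_rfl, hd, orderOf_dvd_of_pow_eq_one (by simpa [add_comm] using hone)⟩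
  · refine ⟨i + 1, by omega, by omega, orderOf_dvd_pow_add_one_of_pow_add_eq_one p n _ ?_⟩
    rwa [show 2 * (i + 1) - 1 + 1 = 2 * (i + 1) by omega]

/-- If `φ` is a monic irreducible polynomial of degree `d` over the field with `q^2`
elements, with nonzero constant term and `φ = φ̃`, and `ρ` is a root of `φ` in the
field with `q^{2d}` elements, then there is `1 ≤ j ≤ d` such that the multiplicative
order of `ρ` divides `q^{2j-1} + 1`. -/
theorem order_root_selfconj_dvd (q d : ℕ) (hq : IsPrimePow q) (hd : 0 < d)
    (F : Type) [Field F] [Fintype F] (hF : Fintype.card F = q ^ 2)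
    (E : Type) [Field E] [Fintype E] [Algebra F E] (hE : Fintype.card E = q ^ (2 * d))
    (φ : Polynomial F) (hmonic : φ.Monic) (hirr : Irreducible φ)
    (hdeg : φ.natDegree = d) (h0 : φ.coeff 0 ≠ 0)
    (hself : φ = X ^ d + ∑ j ∈ Finset.range d,
        C ((φ.coeff 0)⁻¹ ^ q * (φ.coeff (d - j)) ^ q) * X ^ j)
    (ρ : E) (hρ : aeval ρ φ = 0) :
    ∃ j : ℕ, 1 ≤ j ∧ j ≤ d ∧ orderOf ρ ∣ q ^ (2 * j - 1) + 1 :=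
  order_root_selfconj_dvd_general q d hq hd F hF E hE φ hirr hdeg h0 hself ρ hρ
end

section
/- Let d_1 < d_2 < … < d_r be distinct positive integers and e_1, …, e_s positive integers with ∑_i d_i + 2∑_j e_j ≤ n. Then lcm(q^{d_1}+1, …, q^{d_r}+1, q^{2e_1}-1, …, q^{2e_s}-1) ≤ 3 q^n for any integer q ≥ 2. -/
open Finset

lemma aux1 (r : ℕ) :
    (∏ i ∈ range (r+1), (2^(i+1)+1)) + 3 * 2^(∑ i ∈ range r, (i+1))
      ≤ 3 * 2^(∑ i ∈ range (r+1), (i+1)) := by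
  induction r with
  | zero => norm_num
  | succ r ih =>
    have hps : ∏ i ∈ range (r+2), (2^(i+1)+1)
        = (∏ i ∈ range (r+1), (2^(i+1)+1)) * (2^(r+2)+1) := prod_range_succ _ _
    have hs1 : ∑ i ∈ range (r+1), (i+1) = (∑ i ∈ range r, (i+1)) + (r+1) :=
      sum_range_succ _ _
    have hs2 : ∑ i ∈ range (r+2), (i+1) = (∑ i ∈ range r, (i+1)) + (r+1) + (r+2) := by
      rw [sum_range_succ, hs1]
    rw [hs1] at ih
    rw [hps, hs1, hs2]
    set P := ∏ i ∈ range (r+1), (2^(i+1)+1)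
    set a := (2:ℕ)^(∑ i ∈ range r, (i+1)) with ha
    set b := (2:ℕ)^(r+1) with hbdef
    have hb2 : 2 ≤ b := by
      have : (2:ℕ)^1 ≤ 2^(r+1) := Nat.pow_le_pow_right (by norm_num) (by omega)
      simpa [hbdef] using this
    have e1 : (2:ℕ)^((∑ i ∈ range r, (i+1)) + (r+1)) = a * b := by
      rw [pow_add]
    have e2 : (2:ℕ)^((∑ i ∈ range r, (i+1)) + (r+1) + (r+2)) = a * b * (2*b) := by
      rw [pow_add, e1, pow_succ, hbdef]; ring
    have e3 : (2:ℕ)^(r+2) = 2*b := by rw [pow_succ, hbdef]; ring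
    rw [e1] at ih
    rw [e1, e2, e3]
    have h1 : 1 ≤ a := Nat.one_le_two_pow
    nlinarith [Nat.mul_le_mul_right (2*b+1) ih]

lemma aux2 (r : ℕ) :
    (∏ i ∈ range r, (2^(i+1)+1)) ≤ 3 * 2^(∑ i ∈ range r, (i+1)) := by
  cases r with
  | zero => norm_num
  | succ r => exact le_trans (Nat.le_add_right _ _) (aux1 r)

lemma fin_lt_apply {r : ℕ} (d : Fin r → ℕ) (hd : StrictMono d) (hdpos : ∀ i, 0 < d i)
    (i : Fin r) : (i : ℕ) < d i := by
  have main : ∀ k, ∀ i : Fin r, (i : ℕ) = k → k < d i := by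
    intro k
    induction k with
    | zero => intro i _; exact hdpos i
    | succ k ih =>
      intro i h
      have hk : k < r := by omega
      have h1 : d ⟨k, hk⟩ < d i := hd (by simp [Fin.lt_def]; omega)
      have h2 := ih ⟨k, hk⟩ rfl
      omega
  exact main i.val i rfl

lemma prod_succ_le {q r : ℕ} (hq : 2 ≤ q) (d : Fin r → ℕ) (hd : StrictMono d)
    (hdpos : ∀ i, 0 < d i) :
    (∏ i, (q ^ d i + 1)) ≤ 3 * q ^ (∑ i, d i) := by
  set T : ℕ := ∑ i : Fin r, ((i : ℕ) + 1) with hT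
  have hpow : ∀ i : Fin r, (2:ℕ)^((i:ℕ)+1) ≤ q ^ d i := by
    intro i
    calc (2:ℕ)^((i:ℕ)+1) ≤ 2 ^ d i := Nat.pow_le_pow_right (by norm_num)
          (fin_lt_apply d hd hdpos i)
      _ ≤ q ^ d i := Nat.pow_le_pow_left hq _
  have key : (∏ i, (q ^ d i + 1)) * 2 ^ T
      ≤ (∏ i, q ^ d i) * (∏ i : Fin r, (2^((i:ℕ)+1)+1)) := by
    rw [hT, ← Finset.prod_pow_eq_pow_sum, ← Finset.prod_mul_distrib,
      ← Finset.prod_mul_distrib]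
    apply Finset.prod_le_prod'
    intro i _
    have := hpow i
    nlinarith
  have h2 : (∏ i, q ^ d i) * (∏ i : Fin r, (2^((i:ℕ)+1)+1))
      ≤ (3 * q ^ (∑ i, d i)) * 2 ^ T := by
    rw [Finset.prod_pow_eq_pow_sum]
    have haux := aux2 r
    rw [← Fin.sum_univ_eq_sum_range (fun i => i + 1) r,
        ← Fin.prod_univ_eq_prod_range (fun i => 2^(i+1)+1) r] at haux
    calc q ^ (∑ i, d i) * (∏ i : Fin r, (2^((i:ℕ)+1)+1))
        ≤ q ^ (∑ i, d i) * (3 * 2 ^ T) := Nat.mul_le_mul_left _ haux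
      _ = (3 * q ^ (∑ i, d i)) * 2 ^ T := by ring
  exact Nat.le_of_mul_le_mul_right (le_trans key h2) (by positivity)

/-- For distinct positive integers `d_1 < ⋯ < d_r` and positive integers `e_1, …, e_s`
with `∑ d_i + 2 ∑ e_j ≤ n`, the least common multiple of the numbers `q^{d_i} + 1` and
`q^{2 e_j} - 1` is at most `3 q^n`, for any integer `q ≥ 2`. -/
theorem lcm_le_three_q_pow (q n r s : ℕ) (hq : 2 ≤ q)
    (d : Fin r → ℕ) (hd : StrictMono d) (hdpos : ∀ i, 0 < d i)
    (e : Fin s → ℕ) (hepos : ∀ j, 0 < e j)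
    (hsum : (∑ i, d i) + 2 * ∑ j, e j ≤ n) :
    Nat.lcm (Finset.univ.lcm fun i => q ^ d i + 1)
        (Finset.univ.lcm fun j => q ^ (2 * e j) - 1) ≤ 3 * q ^ n := by
  set A := Finset.univ.lcm fun i : Fin r => q ^ d i + 1 with hA
  set B := Finset.univ.lcm fun j : Fin s => q ^ (2 * e j) - 1 with hB
  have hApos : ∀ i : Fin r, 0 < q ^ d i + 1 := fun i => by positivity
  have hBpos : ∀ j : Fin s, 0 < q ^ (2 * e j) - 1 := by
    intro j
    have : (1:ℕ) < q ^ (2 * e j) :=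
      Nat.one_lt_pow (by have := hepos j; omega) (by omega)
    omega
  have hAdvd : A ∣ ∏ i, (q ^ d i + 1) :=
    Finset.lcm_dvd fun i _ => Finset.dvd_prod_of_mem _ (Finset.mem_univ i)
  have hBdvd : B ∣ ∏ j, (q ^ (2 * e j) - 1) :=
    Finset.lcm_dvd fun j _ => Finset.dvd_prod_of_mem _ (Finset.mem_univ j)
  have hPApos : 0 < ∏ i, (q ^ d i + 1) := Finset.prod_pos fun i _ => hApos i
  have hPBpos : 0 < ∏ j, (q ^ (2 * e j) - 1) := Finset.prod_pos fun j _ => hBpos j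
  have hAle : A ≤ ∏ i, (q ^ d i + 1) := Nat.le_of_dvd hPApos hAdvd
  have hBle : B ≤ ∏ j, (q ^ (2 * e j) - 1) := Nat.le_of_dvd hPBpos hBdvd
  have hPA : (∏ i, (q ^ d i + 1)) ≤ 3 * q ^ (∑ i, d i) := prod_succ_le hq d hd hdpos
  have hPB : (∏ j, (q ^ (2 * e j) - 1)) ≤ q ^ (2 * ∑ j, e j) := by
    calc (∏ j, (q ^ (2 * e j) - 1)) ≤ ∏ j, q ^ (2 * e j) :=
          Finset.prod_le_prod' fun j _ => Nat.sub_le _ _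
      _ = q ^ (∑ j, 2 * e j) := Finset.prod_pow_eq_pow_sum _ _ _
      _ = q ^ (2 * ∑ j, e j) := by rw [Finset.mul_sum]
  have hApos' : 0 < A := Nat.pos_of_dvd_of_pos hAdvd hPApos
  have hlcm : Nat.lcm A B ≤ A * B := by
    have hBpos' : 0 < B := Nat.pos_of_dvd_of_pos hBdvd hPBpos
    exact Nat.le_of_dvd (Nat.mul_pos hApos' hBpos') (Nat.lcm_dvd_mul A B)
  calc Nat.lcm A B ≤ A * B := hlcm
    _ ≤ (3 * q ^ (∑ i, d i)) * q ^ (2 * ∑ j, e j) :=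
        Nat.mul_le_mul (hAle.trans hPA) (hBle.trans hPB)
    _ = 3 * q ^ ((∑ i, d i) + 2 * ∑ j, e j) := by rw [pow_add]; ring
    _ ≤ 3 * q ^ n := by
        have : q ^ ((∑ i, d i) + 2 * ∑ j, e j) ≤ q ^ n :=
          Nat.pow_le_pow_right (by omega) hsum
        omega
end

section
/- Let p_i denote the i-th prime. Then ∏_{i=ξ}^{⌊e^ξ⌋} (1 - 1/p_i) → 0 as ξ → ∞. -/
/-!
Chebyshev's lower bound `π n ≥ (n log 2 - log (n + 1)) / log n` inverts to
`p_i ≤ 18 (i + 1) (log (i + 1) + 1)`. Since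
`log (log (x + 1) + 1) - log (log x + 1) ≤ 1 / (x (log x + 1))`, the sum of `1 / p_i` over
`ξ ≤ i ≤ e^ξ` telescopes to at least `(log log e^ξ - log log ξ) / 18`, which tends to infinity,
and `∏ (1 - 1 / p_i) ≤ exp (-∑ 1 / p_i)`.
-/

open Filter Real Finset

theorem log_sub_log_le_div {a b : ℝ} (ha : 0 < a) (hb : 0 < b) : log a - log b ≤ (a - b) / b := by
  rw [← log_div ha.ne' hb.ne', sub_div, div_self hb.ne']
  exact log_le_sub_one_of_pos (div_pos ha hb)

theorem log_le_half_self {s : ℝ} (hs : 0 < s) : log s ≤ s / 2 := by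
  have := log_le_sub_one_of_pos (half_pos hs)
  rw [log_div hs.ne' two_ne_zero] at this
  linarith [log_two_lt_d9]

theorem log_log_add_one_sub_le {x : ℝ} (hx : 1 ≤ x) :
    log (log (x + 1) + 1) - log (log x + 1) ≤ 1 / (x * (log x + 1)) := by
  have hL : 0 ≤ log x := log_nonneg hx
  have hstep : log (x + 1) - log x ≤ 1 / x := by
    simpa using log_sub_log_le_div (by linarith : 0 < x + 1) (by linarith : 0 < x)
  calc log (log (x + 1) + 1) - log (log x + 1)
      ≤ (log (x + 1) + 1 - (log x + 1)) / (log x + 1) :=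
        log_sub_log_le_div (by linarith [log_nonneg (by linarith : 1 ≤ x + 1)]) (by linarith)
    _ ≤ 1 / x / (log x + 1) := by gcongr; linarith
    _ = 1 / (x * (log x + 1)) := by rw [div_div]

theorem log_log_add_one_sub_le_sum {a b : ℕ} (ha : 1 ≤ a) (hab : a ≤ b) :
    log (log b + 1) - log (log a + 1) ≤ ∑ i ∈ Ico a b, 1 / (i * (log i + 1)) := by
  rw [← sum_Ico_sub (fun i : ℕ => log (log i + 1)) hab]
  refine sum_le_sum fun i hi => ?_
  have hi : (1 : ℝ) ≤ i := by exact_mod_cast ha.trans (mem_Ico.1 hi).1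
  simpa using log_log_add_one_sub_le hi

theorem prod_one_sub_le_exp_neg_sum {ι : Type*} (s : Finset ι) {f : ι → ℝ}
    (hf : ∀ i ∈ s, f i ≤ 1) : ∏ i ∈ s, (1 - f i) ≤ exp (-∑ i ∈ s, f i) := by
  rw [← sum_neg_distrib, exp_sum]
  exact prod_le_prod (fun i hi => sub_nonneg.2 (hf i hi)) fun i _ => one_sub_le_exp_neg (f i)

theorem nth_prime_le_two_mul_of_mul_log_le {n i : ℕ} (hn : 2 ≤ n)
    (h : ((i : ℝ) + 1) * log (2 * n) ≤ n) : Nat.nth Nat.Prime i ≤ 2 * n := by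
  have hn' : (2 : ℝ) ≤ n := by exact_mod_cast hn
  have hlog_pos : 0 < log (2 * n) := log_pos (by linarith)
  have hlog_succ : log (2 * n + 1) ≤ log 2 + log (2 * n) := by
    rw [← log_mul two_ne_zero (by positivity)]
    exact log_le_log (by positivity) (by linarith)
  have hcount : i < Nat.primeCounting (2 * n) := by
    have hpi := Chebyshev.pi_ge (2 * n)
    push_cast at hpi
    rw [div_le_iff₀ hlog_pos] at hpi
    have : (i : ℝ) * log (2 * n) < Nat.primeCounting (2 * n) * log (2 * n) := by
      nlinarith [log_two_gt_d9]
    exact_mod_cast lt_of_mul_lt_mul_right this hlog_pos.le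
  have := Nat.nth_lt_of_lt_count hcount
  omega

theorem nth_prime_le_mul_log (i : ℕ) :
    (Nat.nth Nat.Prime i : ℝ) ≤ 18 * (i + 1) * (log (i + 1) + 1) := by
  set x : ℝ := i + 1
  have hx : 1 ≤ x := by simp [x]
  have hL : 0 ≤ log x := log_nonneg hx
  have hLx : log x + 1 ≤ x := by linarith [log_le_sub_one_of_pos (by linarith : 0 < x)]
  -- `2 n ≤ 32 x²`, so `n = ⌈8 x (log x + 1)⌉` exceeds `x log (2 n)`
  set y := 8 * x * (log x + 1)
  have hy : 8 ≤ y := by nlinarith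
  set n := ⌈y⌉₊
  have hyn : y ≤ n := Nat.le_ceil y
  have hny : (n : ℝ) < y + 1 := Nat.ceil_lt_add_one (by linarith)
  have hn : 2 ≤ n := by exact_mod_cast (by linarith : (2 : ℝ) ≤ n)
  have hlog : log (2 * n) ≤ 5 * log 2 + 2 * log x := by
    calc log (2 * n) ≤ log (2 ^ 5 * x ^ 2) := log_le_log (by positivity) (by nlinarith)
      _ = 5 * log 2 + 2 * log x := by
        rw [log_mul (by positivity) (by positivity), log_pow, log_pow]; push_cast; ring
  have hcond : x * log (2 * n) ≤ n := by
    calc x * log (2 * n) ≤ x * (8 * (log x + 1)) := by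
          gcongr; linarith [log_two_lt_d9]
      _ = y := by ring
      _ ≤ n := hyn
  have := nth_prime_le_two_mul_of_mul_log_le hn hcond
  calc (Nat.nth Nat.Prime i : ℝ) ≤ 2 * n := by exact_mod_cast this
    _ ≤ 18 * x * (log x + 1) := by nlinarith

theorem one_div_nth_prime_le_one (j : ℕ) : 1 / (Nat.nth Nat.Prime j : ℝ) ≤ 1 :=
  div_le_one_of_le₀ (by exact_mod_cast (Nat.prime_nth_prime j).one_lt.le) (Nat.cast_nonneg _)

theorem log_sub_one_div_le_sum_one_div_nth_prime {ξ : ℕ} (hξ : 1 ≤ ξ) :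
    (log ξ - 1) / 36 ≤ ∑ i ∈ Icc ξ ⌊exp ξ⌋₊, 1 / (Nat.nth Nat.Prime (i - 1) : ℝ) := by
  set M := ⌊exp ξ⌋₊
  have hξ' : (1 : ℝ) ≤ ξ := by exact_mod_cast hξ
  have hM : exp ξ < M + 1 := Nat.lt_floor_add_one _
  have hξM : ξ ≤ M + 1 := by
    exact_mod_cast (by linarith [add_one_le_exp (ξ : ℝ)] : (ξ : ℝ) ≤ M + 1)
  have hlogM : (ξ : ℝ) ≤ log (M + 1) := by
    rw [le_log_iff_exp_le (by positivity)]; exact hM.le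
  have hterm : ∀ i ∈ Icc ξ M,
      1 / (18 * (i * (log i + 1))) ≤ 1 / (Nat.nth Nat.Prime (i - 1) : ℝ) := by
    intro i hi
    have hi : 1 ≤ i := hξ.trans (mem_Icc.1 hi).1
    have hp : (0 : ℝ) < Nat.nth Nat.Prime (i - 1) := by
      exact_mod_cast (Nat.prime_nth_prime _).pos
    have := nth_prime_le_mul_log (i - 1)
    rw [Nat.cast_sub hi, Nat.cast_one, sub_add_cancel] at this
    gcongr
    linarith
  have htelescope := log_log_add_one_sub_le_sum hξ hξM
  rw [Ico_add_one_right_eq_Icc] at htelescope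
  have hlogξ : 0 ≤ log ξ := log_nonneg hξ'
  have hlow : log ξ ≤ log (log (M + 1 : ℕ) + 1) := by
    push_cast
    exact log_le_log (by positivity) (by linarith)
  calc (log ξ - 1) / 36 ≤ (log (log (M + 1 : ℕ) + 1) - log (log ξ + 1)) / 18 := by
        linarith [log_le_half_self (by linarith : 0 < log ξ + 1)]
    _ ≤ (∑ i ∈ Icc ξ M, 1 / (i * (log i + 1))) / 18 := by gcongr
    _ = ∑ i ∈ Icc ξ M, 1 / (18 * (i * (log i + 1))) := by
        rw [sum_div]; refine sum_congr rfl fun i _ => ?_; rw [div_div, mul_comm]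
    _ ≤ _ := sum_le_sum hterm

theorem tendsto_sum_one_div_nth_prime_Icc_exp :
    Tendsto (fun ξ : ℕ => ∑ i ∈ Icc ξ ⌊exp ξ⌋₊, 1 / (Nat.nth Nat.Prime (i - 1) : ℝ))
      atTop atTop := by
  have hlog : Tendsto (fun ξ : ℕ => (log ξ - 1) / 36) atTop atTop :=
    (tendsto_atTop_add_const_right _ _
      (tendsto_log_atTop.comp tendsto_natCast_atTop_atTop)).atTop_div_const (by norm_num)
  exact tendsto_atTop_mono' _
    ((eventually_ge_atTop 1).mono fun _ => log_sub_one_div_le_sum_one_div_nth_prime) hlog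

/-- With `p_i` the `i`-th prime (`p_1 = 2`), the product
`∏_{i=ξ}^{⌊e^ξ⌋} (1 - 1/p_i)` tends to `0` as `ξ → ∞`. -/
theorem prod_one_sub_inv_prime_tendsto_zero :
    Filter.Tendsto
      (fun ξ : ℕ =>
        ∏ i ∈ Finset.Icc ξ ⌊Real.exp ξ⌋₊, (1 - 1 / (Nat.nth Nat.Prime (i - 1) : ℝ)))
      Filter.atTop (nhds 0) := by
  have hexp := tendsto_exp_atBot.comp
    (tendsto_neg_atTop_atBot.comp tendsto_sum_one_div_nth_prime_Icc_exp)
  refine tendsto_of_tendsto_of_tendsto_of_le_of_le tendsto_const_nhds hexp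
    (fun ξ => prod_nonneg fun i _ => sub_nonneg.2 (one_div_nth_prime_le_one _))
    (fun ξ => prod_one_sub_le_exp_neg_sum _ fun i _ => one_div_nth_prime_le_one _)
end
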